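/- Let h_n denote the n-th L²-normalized Hermite function, h_n(x) = (2^n n! √π)^{-1/2} (-1)^n e^{x²/2} (d/dx)^n e^{-x²}. Then there is an absolute constant C such that for all n ≥ 0 and all real x with |x| > 10√n, one has |h_n(x)| ≤ C e^{-x²/4}. -/

import Mathlib

/-!
Writing `Heₙ` for the probabilists' Hermite polynomials, `hₙ(x)² = Heₙ(√2 x)² e^{-x²} / (n! √π)`.
The three-term recurrence `Heₙ₊₂ = y Heₙ₊₁ - (n + 1) Heₙ` gives `|Heₙ(y)| ≤ (2|y|)ⁿ` as long as
`n ≤ 2y²`, so for `x² > 100 n` we get `hₙ(x)² ≤ (8x²)ⁿ e^{-x²} / n!`. Finally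
`(8x²)ⁿ ≤ 32ⁿ n! e^{x²/4}` (one term of the exponential series) and `x²/4 > 25 n` with
`32 < e²⁵` give `(8x²)ⁿ e^{-x²/2} ≤ n!`, i.e. `|hₙ(x)| ≤ e^{-x²/4}`: the constant is `C = 1`.
-/

/-- The `n`-th L²-normalized Hermite function. -/
noncomputable def hermiteFn (n : ℕ) (x : ℝ) : ℝ :=
  ((2 : ℝ) ^ n * (n.factorial : ℝ) * Real.sqrt Real.pi) ^ (-(1/2 : ℝ)) * (-1) ^ n *
    Real.exp (x ^ 2 / 2) * iteratedDeriv n (fun t => Real.exp (-t ^ 2)) x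

open Real

namespace Polynomial

theorem derivative_hermite_succ (n : ℕ) :
    derivative (hermite (n + 1)) = (n + 1 : ℤ[X]) * hermite n := by
  induction n with
  | zero => simp
  | succ n ih =>
    rw [hermite_succ (n + 1), derivative_sub, derivative_mul, derivative_X, ih,
      derivative_mul, hermite_succ n]
    simp only [derivative_add, derivative_natCast, derivative_one, Nat.cast_add, Nat.cast_one]
    ring

theorem hermite_succ_succ (n : ℕ) :
    hermite (n + 2) = X * hermite (n + 1) - (n + 1 : ℤ[X]) * hermite n := by
  rw [hermite_succ (n + 1), derivative_hermite_succ]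

theorem abs_aeval_hermite_le {y : ℝ} {n : ℕ} (hn : (n : ℝ) ≤ 2 * y ^ 2) :
    |aeval y (hermite n)| ≤ (2 * |y|) ^ n := by
  induction n using Nat.twoStepInduction with
  | zero => simp
  | one => simpa using le_mul_of_one_le_left (abs_nonneg y) one_le_two
  | more n ih₀ ih₁ =>
    have h₀ := ih₀ (by push_cast at hn ⊢; linarith)
    have h₁ := ih₁ (by push_cast at hn ⊢; linarith)
    rw [hermite_succ_succ]
    simp only [map_sub, map_mul, aeval_X, map_add, map_natCast, map_one]
    calc |y * aeval y (hermite (n + 1)) - (n + 1) * aeval y (hermite n)|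
        ≤ |y| * (2 * |y|) ^ (n + 1) + (n + 1) * (2 * |y|) ^ n := by
          refine (abs_sub _ _).trans (add_le_add ?_ ?_) <;> rw [abs_mul]
          · exact mul_le_mul_of_nonneg_left h₁ (abs_nonneg y)
          · rw [abs_of_nonneg (by positivity : (0 : ℝ) ≤ n + 1)]
            exact mul_le_mul_of_nonneg_left h₀ (by positivity)
      _ = (2 * |y|) ^ n * (2 * y ^ 2 + (n + 1)) := by rw [← sq_abs y]; ring
      _ ≤ (2 * |y|) ^ n * (4 * y ^ 2) := by gcongr; push_cast at hn; linarith
      _ = (2 * |y|) ^ (n + 2) := by rw [← sq_abs y]; ring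

end Polynomial

open Polynomial

theorem iteratedDeriv_exp_neg_sq (n : ℕ) (x : ℝ) :
    iteratedDeriv n (fun t => exp (-t ^ 2)) x =
      (-√2) ^ n * aeval (√2 * x) (hermite n) * exp (-x ^ 2) := by
  have hscale : ∀ t : ℝ, -t ^ 2 = -((√2 * t) ^ 2 / 2) := fun t => by
    rw [mul_pow, sq_sqrt zero_le_two]; ring
  have hsmooth : ContDiff ℝ n fun y : ℝ => exp (-(y ^ 2 / 2)) := by fun_prop
  simp_rw [hscale, iteratedDeriv_comp_const_mul hsmooth, iteratedDeriv_eq_iterate,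
    deriv_gaussian_eq_hermite_mul_gaussian, neg_pow √2]
  ring

theorem hermiteFn_sq (n : ℕ) (x : ℝ) :
    hermiteFn n x ^ 2 =
      aeval (√2 * x) (hermite n) ^ 2 * exp (-x ^ 2) / (n.factorial * √π) := by
  have hpos : 0 < (2 : ℝ) ^ n * n.factorial * √π := by positivity
  have hexp : (exp (x ^ 2 / 2) * exp (-x ^ 2)) ^ 2 = exp (-x ^ 2) := by
    rw [← exp_add, ← exp_nat_mul]; ring_nf
  have hsign : ((-1 : ℝ) ^ n * (-√2) ^ n) ^ 2 = 2 ^ n := by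
    rw [← mul_pow, neg_one_mul, neg_neg, ← pow_mul, mul_comm, pow_mul, sq_sqrt zero_le_two]
  rw [hermiteFn, iteratedDeriv_exp_neg_sq, rpow_neg hpos.le, ← sqrt_eq_rpow]
  calc _ = (√(2 ^ n * n.factorial * √π) ^ 2)⁻¹ * ((-1 : ℝ) ^ n * (-√2) ^ n) ^ 2 *
        aeval (√2 * x) (hermite n) ^ 2 * (exp (x ^ 2 / 2) * exp (-x ^ 2)) ^ 2 := by ring
    _ = _ := by
      rw [sq_sqrt hpos.le, hsign, hexp]
      field_simp

theorem pow_mul_exp_neg_le_factorial {n : ℕ} {s : ℝ} (hs : 100 * n ≤ s) :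
    (8 * s) ^ n * exp (-s / 2) ≤ n.factorial := by
  have hs₀ : 0 ≤ s := le_trans (by positivity) hs
  have hpow : s ^ n ≤ 4 ^ n * n.factorial * exp (s / 4) := by
    have := pow_div_factorial_le_exp (s / 4) (by positivity) n
    rw [div_pow, div_div, div_le_iff₀ (by positivity)] at this
    linarith
  have hexp : exp (s / 4) * exp (-s / 2) = exp (-s / 4) := by rw [← exp_add]; ring_nf
  have h32 : (32 : ℝ) ≤ exp 25 := by
    have := pow_div_factorial_le_exp 25 (by norm_num) 2
    norm_num [Nat.factorial] at this
    linarith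
  calc (8 * s) ^ n * exp (-s / 2)
      ≤ 8 ^ n * (4 ^ n * n.factorial * exp (s / 4)) * exp (-s / 2) := by
        rw [mul_pow]; gcongr
    _ = n.factorial * (8 * 4) ^ n * (exp (s / 4) * exp (-s / 2)) := by rw [mul_pow]; ring
    _ = n.factorial * 32 ^ n * exp (-s / 4) := by rw [hexp]; norm_num
    _ ≤ n.factorial * 32 ^ n * exp (-25 * n) := by gcongr; linarith
    _ = n.factorial * (32 / exp 25) ^ n := by
        rw [div_pow, ← exp_nat_mul, div_eq_mul_inv, ← exp_neg]; ring_nf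
    _ ≤ n.factorial := by
        refine mul_le_of_le_one_right (by positivity) (pow_le_one₀ (by positivity) ?_)
        rwa [div_le_one (exp_pos 25)]

theorem hermiteFn_sq_le {n : ℕ} {x : ℝ} (hx : 100 * n ≤ x ^ 2) :
    hermiteFn n x ^ 2 ≤ exp (-x ^ 2 / 2) := by
  have hy : (n : ℝ) ≤ 2 * (√2 * x) ^ 2 := by
    rw [mul_pow, sq_sqrt zero_le_two]; linarith [sq_nonneg x]
  have hH : aeval (√2 * x) (hermite n) ^ 2 ≤ (8 * x ^ 2) ^ n := by
    calc _ = |aeval (√2 * x) (hermite n)| ^ 2 := (sq_abs _).symm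
      _ ≤ ((2 * |√2 * x|) ^ n) ^ 2 := by gcongr; exact abs_aeval_hermite_le hy
      _ = (8 * x ^ 2) ^ n := by
        rw [← pow_mul, mul_comm n, pow_mul, mul_pow, sq_abs, mul_pow √2, sq_sqrt zero_le_two]
        ring
  have hpi : 1 ≤ √π := one_le_sqrt.mpr (by linarith [pi_gt_three])
  have hexp : exp (-x ^ 2) = exp (-x ^ 2 / 2) * exp (-x ^ 2 / 2) := by rw [← exp_add]; ring_nf
  rw [hermiteFn_sq]
  calc _ ≤ (8 * x ^ 2) ^ n * exp (-x ^ 2) / (n.factorial * 1) := by gcongr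
    _ = (8 * x ^ 2) ^ n * exp (-x ^ 2 / 2) / n.factorial * exp (-x ^ 2 / 2) := by
        rw [hexp, mul_one]; ring
    _ ≤ exp (-x ^ 2 / 2) := by
        refine mul_le_of_le_one_left (exp_pos _).le ?_
        rw [div_le_one (by positivity)]
        exact pow_mul_exp_neg_le_factorial hx

/-- Gaussian decay of Hermite functions in the range |x| > 10√n. -/
theorem stmt4 : ∃ C : ℝ, ∀ (n : ℕ) (x : ℝ), |x| > 10 * Real.sqrt n →
    |hermiteFn n x| ≤ C * Real.exp (-x ^ 2 / 4) := by
  refine ⟨1, fun n x hx => ?_⟩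
  have hx2 : 100 * (n : ℝ) ≤ x ^ 2 := by
    have := pow_le_pow_left₀ (by positivity) hx.le 2
    rw [mul_pow, sq_sqrt n.cast_nonneg, sq_abs] at this
    linarith
  rw [one_mul]
  refine abs_le_of_sq_le_sq ?_ (exp_pos _).le
  calc hermiteFn n x ^ 2 ≤ exp (-x ^ 2 / 2) := hermiteFn_sq_le hx2
    _ = exp (-x ^ 2 / 4) ^ 2 := by rw [← exp_nat_mul]; ring_nf
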